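/- arXiv:1010.3463 — 5 statements merged into one kernel-verified Lean document; each statement's English description precedes it below -/
import Mathlib

section
/- Every linearly stratifiable space (i.e., every space stratifiable over some ordinal α ≥ ω) is a D-space. -/
open Set TopologicalSpace

/-- `X` is a D-space: for every open neighborhood assignment `N` there is a
closed discrete subset `D` with `⋃ d ∈ D, N d = univ`. -/
def IsDSpace (X : Type*) [TopologicalSpace X] : Prop :=
  ∀ N : X → Set X, (∀ x, IsOpen (N x)) → (∀ x, x ∈ N x) →
    ∃ D : Set X, IsClosed D ∧ DiscreteTopology D ∧ (⋃ d ∈ D, N d) = Set.univ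

/-- `X` is stratifiable over the ordinal `α`: there is a map `G` assigning to each
`β < α` and each open `U` an open set `G β U` such that `closure (G β U) ⊆ U`,
the sets `G β U` for `β < α` cover `U`, `G` is monotone in `U`, and increasing in `β`. -/
def StratifiableOver (X : Type*) [TopologicalSpace X] (α : Ordinal) : Prop :=
  ∃ G : Ordinal → Set X → Set X,
    (∀ β < α, ∀ U : Set X, IsOpen U → IsOpen (G β U)) ∧
    (∀ β < α, ∀ U : Set X, IsOpen U → closure (G β U) ⊆ U) ∧
    (∀ U : Set X, IsOpen U → (⋃ β ∈ Set.Iio α, G β U) = U) ∧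
    (∀ U V : Set X, IsOpen U → IsOpen V → U ⊆ V → ∀ β < α, G β U ⊆ G β V) ∧
    (∀ U : Set X, IsOpen U → ∀ γ β : Ordinal, γ < β → β < α → G γ U ⊆ G β U)

/-!
Give each point `x` a rank `ρ x < α` with `x ∈ G (ρ x) (N x)`, well-order `X` by rank (ties
broken arbitrarily) and select points greedily, keeping `x` unless an earlier kept point's
neighbourhood already contains it. The kept points before a kept `d` have rank at most `ρ d`,
so by monotonicity they all lie in `G (ρ d) W`, where `W` is the union of their
neighbourhoods; hence their closure stays inside `W`. A point `z` is therefore isolated from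
the kept set by `N d \ closure {kept points before d}`, where `d` is the first kept point
with `z ∈ N d`.
-/

open Filter Topology

section Greedy

variable {X : Type*} (r : X → X → Prop) (N : X → Set X)

def greedyCover [IsWellFounded X r] : Set X :=
  {x | IsWellFounded.fix r (motive := fun _ => Prop)
    (fun x kept => ∀ y (hyx : r y x), kept y hyx → x ∉ N y) x}

variable {r N}

theorem mem_greedyCover_iff [IsWellFounded X r] {x : X} :
    x ∈ greedyCover r N ↔ ∀ y, r y x → y ∈ greedyCover r N → x ∉ N y := by
  unfold greedyCover
  exact Iff.of_eq (IsWellFounded.fix_eq _ _ _)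

theorem exists_mem_greedyCover_mem [IsWellFounded X r] (hN : ∀ x, x ∈ N x) (z : X) :
    ∃ d ∈ greedyCover r N, z ∈ N d := by
  by_contra! hz
  exact hz z (mem_greedyCover_iff.2 fun y _ hy => hz y hy) (hN z)

theorem rel_of_mem_greedyCover [IsWellOrder X r] {d x : X} (hd : d ∈ greedyCover r N)
    (hx : x ∈ greedyCover r N) (hxd : x ∈ N d) (hne : x ≠ d) : r x d := by
  rcases trichotomous_of r x d with h | h | h
  exacts [h, absurd h hne, absurd hxd (mem_greedyCover_iff.1 hx d h hd)]

theorem isClosed_and_isDiscrete_greedyCover [TopologicalSpace X] [T1Space X] [IsWellOrder X r]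
    (hNo : ∀ x, IsOpen (N x)) (hN : ∀ x, x ∈ N x)
    (hcl : ∀ d ∈ greedyCover r N, closure {e ∈ greedyCover r N | r e d} ⊆
      ⋃ e ∈ {e ∈ greedyCover r N | r e d}, N e) :
    IsClosed (greedyCover r N) ∧ IsDiscrete (greedyCover r N) := by
  set D := greedyCover r N
  refine isClosed_and_discrete_iff.2 fun z => disjoint_principal_right.2 ?_
  have hS : {d ∈ D | z ∈ N d}.Nonempty := exists_mem_greedyCover_mem hN z
  obtain ⟨d, ⟨hdD, hzd⟩, hmin⟩ := (IsWellFounded.wf (r := r)).has_min _ hS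
  set E := {e ∈ D | r e d}
  have hzE : z ∉ closure E := fun h => by
    obtain ⟨e, ⟨heD, hed⟩, hze⟩ := mem_iUnion₂.1 (hcl d hdD h)
    exact hmin e ⟨heD, hze⟩ hed
  have hV : N d \ closure E ∈ 𝓝 z :=
    ((hNo d).sdiff isClosed_closure).mem_nhds ⟨hzd, hzE⟩
  have hne : ∀ᶠ x in 𝓝[≠] z, x ≠ d := by
    rcases eq_or_ne z d with rfl | h
    exacts [self_mem_nhdsWithin, eventually_ne_nhdsWithin h]
  filter_upwards [nhdsWithin_le_nhds hV, hne] with x ⟨hxd, hxE⟩ hx hxD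
  exact hxE (subset_closure ⟨hxD, rel_of_mem_greedyCover hdD hxD hxd hx⟩)

end Greedy

section RankLex

variable {X β : Type*} [LinearOrder β]

def rankLex (f : X → β) : X → X → Prop :=
  InvImage (Prod.Lex (· < ·) WellOrderingRel) fun x => (f x, x)

instance [WellFoundedLT β] (f : X → β) : IsWellOrder X (rankLex f) :=
  (RelEmbedding.preimage ⟨fun x => (f x, x), fun _ _ h => congrArg Prod.snd h⟩
    (Prod.Lex (· < ·) WellOrderingRel)).isWellOrder

theorem le_of_rankLex {f : X → β} {x y : X} (h : rankLex f x y) : f x ≤ f y := by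
  rcases Prod.lex_def.1 h with h | ⟨h, -⟩
  exacts [h.le, h.le]

end RankLex

theorem closure_subset_biUnion_of_rank_le {X : Type*} [TopologicalSpace X] {α β : Ordinal}
    {G : Ordinal → Set X → Set X}
    (hGcl : ∀ β < α, ∀ U : Set X, IsOpen U → closure (G β U) ⊆ U)
    (hGmono : ∀ U V : Set X, IsOpen U → IsOpen V → U ⊆ V → ∀ β < α, G β U ⊆ G β V)
    (hGincr : ∀ U : Set X, IsOpen U → ∀ γ β : Ordinal, γ < β → β < α → G γ U ⊆ G β U)
    {N : X → Set X} (hNo : ∀ x, IsOpen (N x)) {rank : X → Ordinal}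
    (hrank : ∀ x, x ∈ G (rank x) (N x)) (hβ : β < α) {E : Set X} (hE : ∀ e ∈ E, rank e ≤ β) :
    closure E ⊆ ⋃ e ∈ E, N e := by
  have hW : IsOpen (⋃ e ∈ E, N e) := isOpen_biUnion fun e _ => hNo e
  refine (closure_mono fun e he => ?_).trans (hGcl β hβ _ hW)
  have hre := (hE e he).trans_lt hβ
  have hGW := hGmono _ _ (hNo e) hW (subset_biUnion_of_mem he) _ hre (hrank e)
  rcases (hE e he).lt_or_eq with hlt | heq
  · exact hGincr _ hW _ _ hlt hβ hGW
  · exact heq ▸ hGW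

/-- Every linearly stratifiable space (a T1 space stratifiable over some ordinal
`α ≥ ω`) is a D-space. -/
theorem linearlyStratifiable_isDSpace (X : Type*) [TopologicalSpace X] [T1Space X]
    (h : ∃ α : Ordinal, Ordinal.omega0 ≤ α ∧ StratifiableOver X α) : IsDSpace X := by
  obtain ⟨α, -, G, -, hGcl, hGcover, hGmono, hGincr⟩ := h
  intro N hNo hN
  have hrank : ∀ x, ∃ β < α, x ∈ G β (N x) := fun x => by
    simpa using (hGcover (N x) (hNo x)).superset (hN x)
  choose rank hrankα hrank using hrank
  obtain ⟨hDc, hDd⟩ := isClosed_and_isDiscrete_greedyCover (r := rankLex rank) hNo hN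
    fun d _ => closure_subset_biUnion_of_rank_le hGcl hGmono hGincr hNo hrank (hrankα d)
      fun e he => le_of_rankLex he.2
  refine ⟨_, hDc, hDd.to_subtype, eq_univ_of_forall fun z => ?_⟩
  obtain ⟨d, hd, hzd⟩ := exists_mem_greedyCover_mem (r := rankLex rank) hN z
  exact mem_biUnion hd hzd
end

section
/- Every linearly stratifiable space (i.e., every space stratifiable over some ordinal α ≥ ω) satisfies well-ordered (αA). -/
open Set TopologicalSpace

/-- `X` satisfies well-ordered (αA): there is a family `W (β, x)` (for `β < α`)
of subsets of `X` containing `x`, decreasing in `β`, such that for every open `U`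
containing `x` there are an open `V ∋ x` and `β < α` with `x ∈ W β y ⊆ U`
for all `y ∈ V`. -/
def SatisfiesWellOrderedAlphaA (X : Type*) [TopologicalSpace X] (α : Ordinal) : Prop :=
  ∃ W : Ordinal → X → Set X,
    (∀ β < α, ∀ x : X, x ∈ W β x) ∧
    (∀ (x : X) (β γ : Ordinal), γ < β → β < α → W β x ⊆ W γ x) ∧
    (∀ (x : X) (U : Set X), IsOpen U → x ∈ U →
      ∃ V : Set X, IsOpen V ∧ x ∈ V ∧ ∃ β < α, ∀ y ∈ V, x ∈ W β y ∧ W β y ⊆ U)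

/-- Every linearly stratifiable space (a T1 space stratifiable over some ordinal
`α ≥ ω`) satisfies well-ordered (αA). -/
theorem linearlyStratifiable_satisfiesWellOrderedAlphaA (X : Type*) [TopologicalSpace X]
    [T1Space X] (α : Ordinal) (hα : Ordinal.omega0 ≤ α) (h : StratifiableOver X α) :
    SatisfiesWellOrderedAlphaA X α := by
  obtain ⟨G, hopen, hclos, hcov, hmono, hinc⟩ := h
  refine ⟨fun β y => ⋂₀ {U' | IsOpen U' ∧ y ∈ G β U'}, ?_, ?_, ?_⟩
  · intro β hβ x U' hU'
    exact hclos β hβ U' hU'.1 (subset_closure hU'.2)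
  · intro x β γ hγβ hβ z hz U' hU'
    exact hz U' ⟨hU'.1, hinc U' hU'.1 γ β hγβ hβ hU'.2⟩
  · intro x U hU hxU
    have hx : x ∈ ⋃ β ∈ Set.Iio α, G β U := (hcov U hU).symm ▸ hxU
    simp only [Set.mem_iUnion, Set.mem_Iio, exists_prop] at hx
    obtain ⟨β, hβ, hxG⟩ := hx
    refine ⟨G β U ∩ (closure (G β ({x}ᶜ)))ᶜ, ?_, ?_, β, hβ, ?_⟩
    · exact (hopen β hβ U hU).inter isClosed_closure.isOpen_compl
    · refine ⟨hxG, fun hc => ?_⟩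
      exact hclos β hβ ({x}ᶜ) isOpen_compl_singleton hc rfl
    · intro y hy
      constructor
      · intro U' hU'
        by_contra hxU'
        have hsub : U' ⊆ ({x}ᶜ : Set X) := fun z hz hzx => by
          rw [Set.mem_singleton_iff] at hzx
          exact hxU' (hzx ▸ hz)
        have : y ∈ closure (G β ({x}ᶜ)) :=
          subset_closure
            (hmono U' ({x}ᶜ) hU'.1 isOpen_compl_singleton hsub β hβ hU'.2)
        exact hy.2 this
      · exact fun z hz => hz U ⟨hU, hy.1⟩
end

section
/- A topological space X is Borges normal if and only if X satisfies well-ordered (ωA). -/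
open Set TopologicalSpace

/-- `X` is Borges normal: there are operators `H` and `n`, defined on pairs `(x, U)`
with `U` open and `x ∈ U`, such that `H x U` is open, `x ∈ H x U`, and whenever
`H x U` meets `H y V` and `n x U ≤ n y V`, then `y ∈ U`. -/
def BorgesNormal (X : Type*) [TopologicalSpace X] : Prop :=
  ∃ (H : X → Set X → Set X) (n : X → Set X → ℕ),
    (∀ (x : X) (U : Set X), IsOpen U → x ∈ U → IsOpen (H x U) ∧ x ∈ H x U) ∧
    (∀ (x : X) (U : Set X) (y : X) (V : Set X), IsOpen U → x ∈ U → IsOpen V → y ∈ V →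
      (H x U ∩ H y V).Nonempty → n x U ≤ n y V → y ∈ U)

/-- `X` satisfies well-ordered (ωA): there is a family `W (m, x)` (for `m ∈ ω`)
of subsets of `X` containing `x`, decreasing in `m`, such that for every open `U`
containing `x` there are an open `V ∋ x` and `m ∈ ω` with `x ∈ W m y ⊆ U`
for all `y ∈ V`. -/
def SatisfiesWellOrderedOmegaA (X : Type*) [TopologicalSpace X] : Prop :=
  ∃ W : ℕ → X → Set X,
    (∀ (m : ℕ) (x : X), x ∈ W m x) ∧
    (∀ (x : X) (m k : ℕ), m < k → W k x ⊆ W m x) ∧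
    (∀ (x : X) (U : Set X), IsOpen U → x ∈ U →
      ∃ V : Set X, IsOpen V ∧ x ∈ V ∧ ∃ m : ℕ, ∀ y ∈ V, x ∈ W m y ∧ W m y ⊆ U)

/-- A topological space `X` is Borges normal iff `X` satisfies well-ordered (ωA). -/
theorem borgesNormal_iff_wellOrderedOmegaA (X : Type*) [TopologicalSpace X] :
    BorgesNormal X ↔ SatisfiesWellOrderedOmegaA X := by
  constructor
  · rintro ⟨H, n, h1, h2⟩
    refine ⟨fun m y => {y} ∪ {z | ∃ V, IsOpen V ∧ z ∈ V ∧ m ≤ n z V ∧ y ∈ H z V},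
      fun m x => Or.inl rfl, ?_, ?_⟩
    · rintro y m k hmk z (hz | ⟨V, hV, hzV, hk, hyH⟩)
      · exact Or.inl hz
      · exact Or.inr ⟨V, hV, hzV, le_trans hmk.le hk, hyH⟩
    · intro x U hU hxU
      obtain ⟨hHo, hxH⟩ := h1 x U hU hxU
      refine ⟨H x U ∩ U, hHo.inter hU, ⟨hxH, hxU⟩, n x U, ?_⟩
      rintro y ⟨hyH, hyU⟩
      refine ⟨Or.inr ⟨U, hU, hxU, le_refl _, hyH⟩, ?_⟩
      rintro z (rfl | ⟨V, hV, hzV, hn, hyHz⟩)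
      · exact hyU
      · exact h2 x U z V hU hxU hV hzV ⟨y, hyH, hyHz⟩ hn
  · rintro ⟨W, hWx, hWmono, hW⟩
    classical
    choose V hVo hxV m hm using hW
    have hWmono' : ∀ (x : X) (j k : ℕ), j ≤ k → W k x ⊆ W j x := by
      intro x j k hjk
      rcases lt_or_eq_of_le hjk with h | h
      · exact hWmono x j k h
      · exact h ▸ subset_rfl
    refine ⟨fun x U => if h : IsOpen U ∧ x ∈ U then V x U h.1 h.2 else ∅,
      fun x U => if h : IsOpen U ∧ x ∈ U then m x U h.1 h.2 else 0, ?_, ?_⟩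
    · intro x U hU hxU
      simp only
      rw [dif_pos (And.intro hU hxU)]
      exact ⟨hVo x U hU hxU, hxV x U hU hxU⟩
    · intro x U y V2 hU hxU hV2 hyV2 hne hle
      simp only at hne hle
      rw [dif_pos (And.intro hU hxU), dif_pos (And.intro hV2 hyV2)] at hne
      rw [dif_pos (And.intro hU hxU), dif_pos (And.intro hV2 hyV2)] at hle
      obtain ⟨z, hz1, hz2⟩ := hne
      have h1 := hm x U hU hxU z hz1
      have h2 := hm y V2 hV2 hyV2 z hz2
      exact h1.2 (hWmono' z _ _ hle h2.1)
end

section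
/- Let ≤ be a reflexive, transitive relation on a set S. Then there is a reflexive, antisymmetric relation ≼ on S such that: (1) if x, y ∈ S and x ≤ y, then x ≼ y or y ≼ x; (2) every non-empty subset A of S has a ≼-minimal element, i.e. there is x ∈ A such that y ⋠ x for all y ∈ A \ {x}; (3) if A ⊆ S and A ⊆ {x ∈ S : x ≼ s} for some s ∈ S, then A ⊆ {x ∈ S : x ≤ s'} for some s' ∈ S. -/
/-!
Well-order `S` and send each `x` to `g x`, the least `y` with `x ≤ y`; since `≤` is transitive,
`g` is monotone. Compare points lexicographically by `(g x, x)`, which is a well-order on `S`,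
and let `x ≼ y` hold when `(g x, x)` is at most `(g y, y)` and `x`, `y` are `≤`-comparable.
Minimal elements come from the well-order. If `x ≼ s`, then `x ≤ g s`: either `x ≤ s ≤ g s`,
or `s ≤ x`, in which case monotonicity of `g` forces `g x = g s`.
-/

open Relation

section LexRefinement

variable {S : Type*} [LinearOrder S] [WellFoundedLT S] (r : S → S → Prop) [Std.Refl r]

noncomputable def leastAbove (x : S) : S :=
  wellFounded_lt.min {y | r x y} ⟨x, refl x⟩

noncomputable def leastAboveKey (x : S) : S ×ₗ S :=
  toLex (leastAbove r x, x)

def lexRefinement (x y : S) : Prop :=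
  leastAboveKey r x ≤ leastAboveKey r y ∧ SymmGen r x y

variable {r}

theorem rel_leastAbove (x : S) : r x (leastAbove r x) :=
  wellFounded_lt.min_mem {y | r x y} ⟨x, refl x⟩

theorem leastAbove_le_of_rel [IsTrans S r] {x y : S} (hxy : r x y) :
    leastAbove r x ≤ leastAbove r y :=
  wellFounded_lt.min_le (_root_.trans hxy (rel_leastAbove y))

theorem leastAboveKey_injective : Function.Injective (leastAboveKey r) :=
  fun _ _ h => congrArg Prod.snd (toLex.injective h)

instance : Std.Refl (lexRefinement r) :=
  ⟨fun x => ⟨le_rfl, .of_rel (refl x)⟩⟩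

theorem lexRefinement_antisymm {x y : S} (hxy : lexRefinement r x y)
    (hyx : lexRefinement r y x) : x = y :=
  leastAboveKey_injective (le_antisymm hxy.1 hyx.1)

theorem lexRefinement_or_of_rel {x y : S} (hxy : r x y) :
    lexRefinement r x y ∨ lexRefinement r y x :=
  (le_total _ _).imp (⟨·, .of_rel hxy⟩) (⟨·, .of_rel_symm hxy⟩)

theorem exists_lexRefinement_minimal {A : Set S} (hA : A.Nonempty) :
    ∃ x ∈ A, ∀ y ∈ A, y ≠ x → ¬ lexRefinement r y x := by
  obtain ⟨a, ha⟩ := hA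
  refine ⟨Function.argminOn (leastAboveKey r) A ⟨a, ha⟩, Function.argminOn_mem _ _ _,
    fun y hy hne hyx => hne (lexRefinement_antisymm hyx ⟨?_, hyx.2.symm⟩)⟩
  exact Function.argminOn_le _ _ hy

theorem rel_leastAbove_of_lexRefinement [IsTrans S r] {x s : S} (hxs : lexRefinement r x s) :
    r x (leastAbove r s) := by
  rcases hxs with ⟨hkey, hrxs | hrsx⟩
  · exact _root_.trans hrxs (rel_leastAbove s)
  · have hle : leastAbove r x ≤ leastAbove r s := Prod.Lex.monotone_fst _ _ hkey
    have heq : leastAbove r x = leastAbove r s := le_antisymm hle (leastAbove_le_of_rel hrsx)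
    exact heq ▸ rel_leastAbove x

end LexRefinement

/-- If `r` is a reflexive transitive relation on a set `S`, then there is a
reflexive antisymmetric relation `r'` on `S` such that: (1) `x r y` implies
`x r' y` or `y r' x`; (2) every nonempty subset of `S` has an `r'`-minimal
element; (3) every subset of `S` with an `r'`-upper bound has an `r`-upper bound. -/
theorem exists_reflexive_antisymmetric_relation {S : Type*} (r : S → S → Prop)
    (hrefl : Reflexive r) (htrans : Transitive r) :
    ∃ r' : S → S → Prop,
      Reflexive r' ∧
      (∀ x y : S, r' x y → r' y x → x = y) ∧
      (∀ x y : S, r x y → r' x y ∨ r' y x) ∧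
      (∀ A : Set S, A.Nonempty → ∃ x ∈ A, ∀ y ∈ A, y ≠ x → ¬ r' y x) ∧
      (∀ A : Set S, (∃ s : S, ∀ x ∈ A, r' x s) → ∃ s' : S, ∀ x ∈ A, r x s') := by
  obtain ⟨_, _⟩ := exists_wellFoundedLT S
  have : Std.Refl r := ⟨hrefl⟩
  have : IsTrans S r := ⟨htrans⟩
  refine ⟨lexRefinement r, refl, fun _ _ => lexRefinement_antisymm,
    fun _ _ => lexRefinement_or_of_rel, fun _ => exists_lexRefinement_minimal, ?_⟩
  rintro A ⟨s, hs⟩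
  exact ⟨leastAbove r s, fun x hx => rel_leastAbove_of_lexRefinement (hs x hx)⟩
end

section
/- Let X be a topological space and N an open neighborhood assignment on X. Suppose R is a nearly good relation on X such that every non-empty closed subset F of X contains a non-empty closed discrete subset D which is N-sticky mod R on F. Then there is a closed discrete subset D* of X with ⋃{N(d) : d ∈ D*} = X. -/
open Set TopologicalSpace

def NearlyGood {X : Type*} [TopologicalSpace X] (R : X → X → Prop) : Prop :=
  ∀ (A : Set X) (x : X), x ∈ closure A → ∃ y ∈ A, R x y

def IsSticky {X : Type*} [TopologicalSpace X] (N : X → Set X) (R : X → X → Prop)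
    (D X' : Set X) : Prop :=
  ∀ x ∈ X', (∃ y ∈ D, R x y) → x ∈ ⋃ d ∈ D, N d

/-!
Cover `X` greedily by transfinite recursion: at stage `α`, `uncovered α` is the closed set of
points not in `N d` for any `d` picked earlier, and `stage α ⊆ uncovered α` is a closed discrete
set which is sticky mod `R` on it. Distinct stages are disjoint, so the recursion cannot run
through all ordinals: some `uncovered α` is empty, and the union `D*` of all stages covers `X`.
To see that `D*` is closed discrete, fix `x` and the first stage `β` whose neighbourhoods cover
`x`. The later stages lie in the closed set `uncovered (β + 1)`, which misses `x`; `stage β` is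
closed discrete; and if `x` were in the closure of the earlier stages, near-goodness would give
`x R y` with `y ∈ stage γ`, `γ < β`, and stickiness of `stage γ` on `uncovered γ ∋ x` would cover
`x` at stage `γ`, against the minimality of `β`.
-/

theorem isClosed_and_discreteTopology_iff_notMem_closure_diff {X : Type*} [TopologicalSpace X]
    {D : Set X} : IsClosed D ∧ DiscreteTopology D ↔ ∀ x, x ∉ closure (D \ {x}) := by
  rw [← isDiscrete_iff_discreteTopology, isClosed_and_discrete_iff]
  refine forall_congr' fun x => ?_
  rw [notMem_closure_iff_nhdsWithin_eq_bot, sdiff_eq_compl_inter, nhdsWithin_inter', disjoint_iff]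

universe u

namespace GreedyCover

variable {X : Type u} (N : X → Set X) (pick : Set X → Set X)

noncomputable def stage (α : Ordinal.{u}) : Set X :=
  pick (⋃ β, ⋃ (_ : β < α), ⋃ d ∈ stage β, N d)ᶜ
termination_by α
decreasing_by assumption

def uncovered (α : Ordinal.{u}) : Set X :=
  (⋃ β, ⋃ (_ : β < α), ⋃ d ∈ stage N pick β, N d)ᶜ

theorem stage_eq (α : Ordinal.{u}) : stage N pick α = pick (uncovered N pick α) := by
  rw [stage, uncovered]

variable {N pick}

theorem mem_uncovered_iff {α : Ordinal.{u}} {x : X} :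
    x ∈ uncovered N pick α ↔ ∀ β < α, ∀ d ∈ stage N pick β, x ∉ N d := by
  simp [uncovered]

theorem notMem_uncovered_iff {α : Ordinal.{u}} {x : X} :
    x ∉ uncovered N pick α ↔ ∃ β < α, ∃ d ∈ stage N pick β, x ∈ N d := by
  simp [mem_uncovered_iff]

theorem uncovered_antitone : Antitone (uncovered N pick) := fun _ _ hαβ _ hx =>
  mem_uncovered_iff.2 fun γ hγ => mem_uncovered_iff.1 hx γ (hγ.trans_le hαβ)

theorem isClosed_uncovered [TopologicalSpace X] (hN : ∀ x, IsOpen (N x)) (α : Ordinal.{u}) :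
    IsClosed (uncovered N pick α) :=
  (isOpen_iUnion fun _ => isOpen_iUnion fun _ => isOpen_biUnion fun d _ => hN d).isClosed_compl

theorem exists_mem_uncovered_notMem_uncovered_succ {α : Ordinal.{u}} {x : X}
    (hx : x ∉ uncovered N pick α) :
    ∃ β, x ∈ uncovered N pick β ∧ x ∉ uncovered N pick (Order.succ β) := by
  obtain ⟨β₀, -, hβ₀⟩ := notMem_uncovered_iff.1 hx
  obtain ⟨β, ⟨d, hd, hxd⟩, hmin⟩ :=
    Ordinal.lt_wf.has_min {β | ∃ d ∈ stage N pick β, x ∈ N d} ⟨β₀, hβ₀⟩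
  exact ⟨β, mem_uncovered_iff.2 fun γ hγ d hd hxd => hmin γ ⟨d, hd, hxd⟩ hγ,
    fun h => mem_uncovered_iff.1 h β (Order.lt_succ β) d hd hxd⟩

theorem biUnion_iUnion_stage_eq_univ {α : Ordinal.{u}} (hα : uncovered N pick α = ∅) :
    ⋃ d ∈ ⋃ β, stage N pick β, N d = univ := by
  refine eq_univ_of_forall fun x => ?_
  obtain ⟨β, -, d, hd, hxd⟩ := notMem_uncovered_iff.1 (hα ▸ notMem_empty x)
  exact mem_biUnion (mem_iUnion_of_mem β hd) hxd

theorem disjoint_closure_iUnion_stage_uncovered [TopologicalSpace X] {R : X → X → Prop}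
    (hR : NearlyGood R)
    (hsticky : ∀ α, (uncovered N pick α).Nonempty →
      IsSticky N R (stage N pick α) (uncovered N pick α))
    (β : Ordinal.{u}) :
    Disjoint (closure (⋃ γ, ⋃ (_ : γ < β), stage N pick γ)) (uncovered N pick β) := by
  refine disjoint_left.2 fun x hcl hxβ => ?_
  obtain ⟨y, hy, hxy⟩ := hR _ x hcl
  obtain ⟨γ, hγβ, hyγ⟩ : ∃ γ < β, y ∈ stage N pick γ := by simpa using hy
  have hxγ := uncovered_antitone hγβ.le hxβ
  obtain ⟨d, hd, hxd⟩ : ∃ d ∈ stage N pick γ, x ∈ N d := by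
    simpa using hsticky γ ⟨x, hxγ⟩ x hxγ ⟨y, hyγ, hxy⟩
  exact mem_uncovered_iff.1 hxβ γ hγβ d hd hxd

variable (hpick : ∀ F, pick F ⊆ F)
include hpick

theorem stage_subset_uncovered (α : Ordinal.{u}) : stage N pick α ⊆ uncovered N pick α :=
  stage_eq N pick α ▸ hpick _

theorem disjoint_stage_of_lt (hN : ∀ x, x ∈ N x) {β α : Ordinal.{u}} (hβα : β < α) :
    Disjoint (stage N pick β) (stage N pick α) :=
  disjoint_left.2 fun d hdβ hdα =>
    mem_uncovered_iff.1 (stage_subset_uncovered hpick α hdα) β hβα d hdβ (hN d)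

theorem exists_uncovered_eq_empty (hN : ∀ x, x ∈ N x)
    (hne : ∀ α : Ordinal.{u}, (uncovered N pick α).Nonempty → (stage N pick α).Nonempty) :
    ∃ α : Ordinal.{u}, uncovered N pick α = ∅ := by
  by_contra! h
  choose f hf using fun α => hne α (h α)
  refine not_injective_of_ordinal f fun α β hfαβ => ?_
  by_contra hαβ
  have hdisj : Pairwise (Function.onFun Disjoint (stage N pick)) :=
    (pairwise_disjoint_on _).2 fun _ _ => disjoint_stage_of_lt hpick hN
  exact disjoint_left.1 (hdisj hαβ) (hf α) (hfαβ ▸ hf β)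

theorem notMem_closure_iUnion_stage_diff [TopologicalSpace X] (hN : ∀ x, IsOpen (N x))
    {R : X → X → Prop} (hR : NearlyGood R)
    (hstage : ∀ α, (uncovered N pick α).Nonempty →
      IsClosed (stage N pick α) ∧ DiscreteTopology (stage N pick α) ∧
        IsSticky N R (stage N pick α) (uncovered N pick α))
    {x : X} {β : Ordinal.{u}} (hxβ : x ∈ uncovered N pick β)
    (hxβ' : x ∉ uncovered N pick (Order.succ β)) :
    x ∉ closure ((⋃ γ, stage N pick γ) \ {x}) := by
  have hsplit : (⋃ γ, stage N pick γ) \ {x} ⊆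
      (⋃ γ, ⋃ (_ : γ < β), stage N pick γ) ∪ (stage N pick β \ {x}) ∪
        uncovered N pick (Order.succ β) := by
    rintro y ⟨hy, hyx⟩
    obtain ⟨γ, hyγ⟩ := mem_iUnion.1 hy
    rcases lt_trichotomy γ β with hlt | rfl | hgt
    · exact Or.inl (Or.inl (mem_biUnion hlt hyγ))
    · exact Or.inl (Or.inr ⟨hyγ, hyx⟩)
    · exact Or.inr (uncovered_antitone (Order.succ_le_of_lt hgt)
        (stage_subset_uncovered hpick γ hyγ))
  obtain ⟨hclosed, hdiscrete, -⟩ := hstage β ⟨x, hxβ⟩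
  intro hcl
  have hcl' := closure_mono hsplit hcl
  rw [closure_union, closure_union] at hcl'
  rcases hcl' with (h | h) | h
  · exact disjoint_left.1 (disjoint_closure_iUnion_stage_uncovered hR
      (fun α hα => (hstage α hα).2.2) β) h hxβ
  · exact isClosed_and_discreteTopology_iff_notMem_closure_diff.1 ⟨hclosed, hdiscrete⟩ x h
  · exact hxβ' ((isClosed_uncovered hN _).closure_subset h)

end GreedyCover

open GreedyCover in
/-- Gruenhage's sticky-relation principle: if `N` is an open neighborhood
assignment on `X` and `R` is a nearly good relation such that every nonempty
closed `F ⊆ X` contains a nonempty closed discrete `D` which is `N`-sticky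
mod `R` on `F`, then there is a closed discrete `D*` with `⋃ d ∈ D*, N d = univ`. -/
theorem sticky_relation_principle {X : Type*} [TopologicalSpace X]
    (N : X → Set X) (hNopen : ∀ x, IsOpen (N x)) (hNmem : ∀ x, x ∈ N x)
    (R : X → X → Prop) (hR : NearlyGood R)
    (hsticky : ∀ F : Set X, IsClosed F → F.Nonempty →
      ∃ D : Set X, D ⊆ F ∧ D.Nonempty ∧ IsClosed D ∧ DiscreteTopology D ∧
        IsSticky N R D F) :
    ∃ D : Set X, IsClosed D ∧ DiscreteTopology D ∧ (⋃ d ∈ D, N d) = Set.univ := by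
  have hchoice : ∀ F : Set X, ∃ D ⊆ F, IsClosed F → F.Nonempty →
      D.Nonempty ∧ IsClosed D ∧ DiscreteTopology D ∧ IsSticky N R D F := fun F => by
    by_cases hF : IsClosed F ∧ F.Nonempty
    · obtain ⟨D, hDF, hD⟩ := hsticky F hF.1 hF.2
      exact ⟨D, hDF, fun _ _ => hD⟩
    · exact ⟨∅, empty_subset F, fun h h' => absurd ⟨h, h'⟩ hF⟩
  choose pick hpick_sub hpick using hchoice
  have hstage : ∀ α, (uncovered N pick α).Nonempty → (stage N pick α).Nonempty ∧
      IsClosed (stage N pick α) ∧ DiscreteTopology (stage N pick α) ∧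
        IsSticky N R (stage N pick α) (uncovered N pick α) := fun α hα =>
    stage_eq N pick α ▸ hpick _ (isClosed_uncovered hNopen α) hα
  obtain ⟨α, hα⟩ := exists_uncovered_eq_empty hpick_sub hNmem fun α hα => (hstage α hα).1
  obtain ⟨hclosed, hdiscrete⟩ :=
    isClosed_and_discreteTopology_iff_notMem_closure_diff.2 fun x => by
      obtain ⟨β, hxβ, hxβ'⟩ := exists_mem_uncovered_notMem_uncovered_succ (hα ▸ notMem_empty x)
      exact notMem_closure_iUnion_stage_diff hpick_sub hNopen hR
        (fun α hα => (hstage α hα).2) hxβ hxβ'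
  exact ⟨_, hclosed, hdiscrete, biUnion_iUnion_stage_eq_univ hα⟩
end
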